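/- For the weight function w(i,j) = (i+j)/i², any infinite nondecreasing real sequence 1 = a_0 ≤ a_1 ≤ a_2 ≤ ... has total weight Σ_{k=0}^∞ (a_k + a_{k+1})/a_k² ≥ 3 + 2√2, with equality attained by the geometric sequence a_k = (1+√2)^k. -/

import Mathlib

/-!
The weight telescopes up to a square:
`(x + y) / x² - (3 + 2√2) (1/x - 1/y) = (y - (1 + √2) x)² / (x² y)`.
Summing along a positive sequence gives `∑_{k<n} w(a_k, a_{k+1}) ≥ (3 + 2√2) (1/a_0 - 1/a_n)`.
If the total weight is finite then `1/a_k ≤ w(a_k, a_{k+1}) → 0`, so the bound tends to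
`(3 + 2√2)/a_0`. The geometric sequence of ratio `1 + √2` makes every square vanish.
-/

open Filter Topology

lemma silver_mul_inv_sub_inv_le_weight {x y : ℝ} (hx : 0 < x) (hy : 0 < y) :
    (3 + 2 * √2) * (1 / x - 1 / y) ≤ (x + y) / x ^ 2 := by
  have hsq : √2 ^ 2 = 2 := Real.sq_sqrt zero_le_two
  have hdiff : (x + y) / x ^ 2 - (3 + 2 * √2) * (1 / x - 1 / y)
      = (y - (1 + √2) * x) ^ 2 / (x ^ 2 * y) := by
    field_simp
    linear_combination -x ^ 2 * hsq
  have : 0 ≤ (y - (1 + √2) * x) ^ 2 / (x ^ 2 * y) := by positivity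
  linarith

lemma silver_mul_sub_le_sum_weight {a : ℕ → ℝ} (ha : ∀ k, 0 < a k) (n : ℕ) :
    (3 + 2 * √2) * (1 / a 0 - 1 / a n) ≤
      ∑ k ∈ Finset.range n, (a k + a (k + 1)) / a k ^ 2 := by
  rw [← Finset.sum_range_sub' (fun k => 1 / a k), Finset.mul_sum]
  exact Finset.sum_le_sum fun k _ => silver_mul_inv_sub_inv_le_weight (ha k) (ha (k + 1))

lemma silver_div_le_tsum_weight {a : ℕ → ℝ} (ha : ∀ k, 0 < a k)
    (hsum : Summable fun k => (a k + a (k + 1)) / a k ^ 2) :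
    (3 + 2 * √2) / a 0 ≤ ∑' k, (a k + a (k + 1)) / a k ^ 2 := by
  have inv_le_weight : ∀ k, 1 / a k ≤ (a k + a (k + 1)) / a k ^ 2 := fun k => by
    rw [div_le_div_iff₀ (ha k) (pow_pos (ha k) 2)]
    nlinarith [ha k, ha (k + 1)]
  have hinv : Tendsto (fun n => 1 / a n) atTop (𝓝 0) :=
    squeeze_zero (fun n => (one_div_pos.2 (ha n)).le) inv_le_weight hsum.tendsto_atTop_zero
  have hbound : Tendsto (fun n => (3 + 2 * √2) * (1 / a 0 - 1 / a n)) atTop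
      (𝓝 ((3 + 2 * √2) / a 0)) := by
    convert (hinv.const_sub (1 / a 0)).const_mul (3 + 2 * √2) using 2
    ring
  exact le_of_tendsto_of_tendsto' hbound hsum.hasSum.tendsto_sum_nat
    (silver_mul_sub_le_sum_weight ha)

lemma ofReal_silver_div_le_tsum_weight {a : ℕ → ℝ} (ha : ∀ k, 0 < a k) :
    ENNReal.ofReal ((3 + 2 * √2) / a 0) ≤
      ∑' k, ENNReal.ofReal ((a k + a (k + 1)) / a k ^ 2) := by
  have hnonneg : ∀ k, 0 ≤ (a k + a (k + 1)) / a k ^ 2 := fun k => by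
    have := ha k; have := ha (k + 1); positivity
  obtain htop | htop := eq_or_ne (∑' k, ENNReal.ofReal ((a k + a (k + 1)) / a k ^ 2)) ⊤
  · exact htop ▸ le_top
  have hsum : Summable fun k => (a k + a (k + 1)) / a k ^ 2 := by
    simpa only [ENNReal.toReal_ofReal (hnonneg _)] using ENNReal.summable_toReal htop
  rw [← ENNReal.ofReal_tsum_of_nonneg hnonneg hsum]
  exact ENNReal.ofReal_le_ofReal (silver_div_le_tsum_weight ha hsum)

lemma tsum_weight_geometric {r : ℝ} (hr : 1 < r) :
    ∑' k : ℕ, (r ^ k + r ^ (k + 1)) / (r ^ k) ^ 2 = r * (r + 1) / (r - 1) := by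
  have hr0 : 0 < r := zero_lt_one.trans hr
  have hterm : ∀ k : ℕ, (r ^ k + r ^ (k + 1)) / (r ^ k) ^ 2 = (1 + r) * r⁻¹ ^ k :=
      fun k => by
    have : r ^ k ≠ 0 := pow_ne_zero k hr0.ne'
    rw [pow_succ, inv_pow]
    field_simp
  rw [tsum_congr hterm, tsum_mul_left,
    tsum_geometric_of_lt_one (inv_nonneg.2 hr0.le) (inv_lt_one_of_one_lt₀ hr)]
  have : r - 1 ≠ 0 := sub_ne_zero.2 hr.ne'
  field_simp
  ring

theorem stmt_11 :
    (∀ a : ℕ → ℝ, a 0 = 1 → Monotone a →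
      ENNReal.ofReal (3 + 2 * Real.sqrt 2) ≤
        ∑' k : ℕ, ENNReal.ofReal ((a k + a (k+1)) / (a k) ^ 2)) ∧
    ∑' k : ℕ, (((1 + Real.sqrt 2) ^ k + (1 + Real.sqrt 2) ^ (k+1)) / ((1 + Real.sqrt 2) ^ k) ^ 2)
      = 3 + 2 * Real.sqrt 2 := by
  refine ⟨fun a ha0 hmono => ?_, ?_⟩
  · have ha : ∀ k, 0 < a k := fun k => zero_lt_one.trans_le (ha0 ▸ hmono k.zero_le)
    simpa [ha0] using ofReal_silver_div_le_tsum_weight ha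
  · have hsq : √2 ^ 2 = 2 := Real.sq_sqrt zero_le_two
    have hpos : 0 < √2 := by positivity
    rw [tsum_weight_geometric (lt_add_of_pos_right 1 hpos)]
    field_simp
    linear_combination -hsq
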